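/- arXiv:2007.08740 — 2 statements merged into one kernel-verified Lean document; each statement's English description precedes it below -/
import Mathlib

section
/- Let G be a simple graph on a finite nonempty vertex set V, let Z ⊆ V, and let β ∈ ℝ^V. Let K = {x ∈ ℝ^V : x_u = x_v for every pair of adjacent vertices u, v; x_i = 0 for all i ∈ Z; and x_i ≥ 0 for all i}. Then the vector x* defined by x*_i = 0 if the connected component C(i) of i intersects Z, and x*_i = max( (1/|C(i)|) Σ_{j ∈ C(i)} β_j , 0 ) otherwise, belongs to K and is the unique minimizer over K of x ↦ ‖x − β‖₂. -/
open scoped BigOperators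

lemma aux_const_of_reachable {V : Type*} (G : SimpleGraph V) {x : V → ℝ}
    (hadj : ∀ u v : V, G.Adj u v → x u = x v) {u v : V} (h : G.Reachable u v) :
    x u = x v := by
  obtain ⟨w⟩ := h
  induction w with
  | nil => rfl
  | cons a p ih => exact (hadj _ _ a).trans ih

lemma aux_set_eq {V : Type*} (G : SimpleGraph V) {u v : V} (h : G.Reachable u v) :
    {k | G.Reachable u k} = {k | G.Reachable v k} := by
  ext k
  exact ⟨fun h' => h.symm.trans h', fun h' => h.trans h'⟩

open Classical in
/-- Full closed form of the constrained projection step `β_les = P_{S,≥0}(β_pre)` of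
GSplit LBI: the unique minimizer of `‖x − β‖₂` over nonnegative vectors that are constant
on connected components and vanish on `Z` is, on each component, `0` if the component
meets `Z` and the component mean clipped at zero otherwise. -/
theorem stmt_9 {V : Type*} [Fintype V] [Nonempty V] (G : SimpleGraph V) (Z : Set V)
    (β : V → ℝ) :
    let K : Set (V → ℝ) :=
      {x | (∀ u v : V, G.Adj u v → x u = x v) ∧ (∀ i ∈ Z, x i = 0) ∧ ∀ i : V, 0 ≤ x i}
    let xstar : V → ℝ := fun i =>
      if ({j : V | G.Reachable i j} ∩ Z).Nonempty then 0
      else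
        max ((∑ᶠ j ∈ {j : V | G.Reachable i j}, β j) /
          ({j : V | G.Reachable i j}.ncard : ℝ)) 0
    let d : (V → ℝ) → ℝ := fun x => Real.sqrt (∑ i, (x i - β i) ^ 2)
    xstar ∈ K ∧ (∀ x ∈ K, d xstar ≤ d x) ∧
      ∀ x ∈ K, (∀ y ∈ K, d x ≤ d y) → x = xstar := by
  intro K xstar d
  have hxs_reach : ∀ u v : V, G.Reachable u v → xstar u = xstar v := by
    intro u v h
    simp only [xstar, aux_set_eq G h]
  have hxsK : xstar ∈ K := by
    refine ⟨fun u v h => hxs_reach u v h.reachable, fun i hi => ?_, fun i => ?_⟩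
    · have hne : ({j : V | G.Reachable i j} ∩ Z).Nonempty :=
        ⟨i, ⟨SimpleGraph.Reachable.refl i, hi⟩⟩
      simp only [xstar, if_pos hne]
    · simp only [xstar]
      split
      · exact le_refl 0
      · exact le_max_right _ _
  -- key nonnegativity of the cross term
  have hT : ∀ x ∈ K, 0 ≤ ∑ i, (x i - xstar i) * (xstar i - β i) := by
    rintro x ⟨hadj, hZx, hpos⟩
    haveI : Fintype G.ConnectedComponent := Fintype.ofFinite _
    rw [← Finset.sum_fiberwise Finset.univ (fun i => G.connectedComponentMk i)
      (fun i => (x i - xstar i) * (xstar i - β i))]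
    apply Finset.sum_nonneg
    intro c _
    obtain ⟨v, hv⟩ := c.exists_rep
    have hv' : G.connectedComponentMk v = c := hv
    rw [← hv']
    set F := Finset.univ.filter
      (fun i => G.connectedComponentMk i = G.connectedComponentMk v) with hF
    have hmemF : ∀ i, i ∈ F ↔ G.Reachable v i := by
      intro i
      simp only [hF, Finset.mem_filter, Finset.mem_univ, true_and,
        SimpleGraph.ConnectedComponent.eq]
      exact ⟨fun h => h.symm, fun h => h.symm⟩
    have hvF : v ∈ F := (hmemF v).mpr (SimpleGraph.Reachable.refl v)
    have hset : {j : V | G.Reachable v j} = (↑F : Set V) := by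
      ext j; simp [hmemF]
    have hxconst : ∀ i ∈ F, x i = x v :=
      fun i hi => (aux_const_of_reachable G hadj ((hmemF i).mp hi)).symm
    have hxsconst : ∀ i ∈ F, xstar i = xstar v :=
      fun i hi => (hxs_reach v i ((hmemF i).mp hi)).symm
    have hsum : ∑ i ∈ F, (x i - xstar i) * (xstar i - β i)
        = (x v - xstar v) * ((F.card : ℝ) * xstar v - ∑ i ∈ F, β i) := by
      rw [Finset.sum_congr rfl (fun i hi => by rw [hxconst i hi, hxsconst i hi]),
        ← Finset.mul_sum, Finset.sum_sub_distrib, Finset.sum_const, nsmul_eq_mul]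
    rw [hsum]
    by_cases hne : ({j : V | G.Reachable v j} ∩ Z).Nonempty
    · obtain ⟨z, hzr, hzZ⟩ := hne
      have hxv : x v = 0 := (aux_const_of_reachable G hadj hzr).trans (hZx z hzZ)
      have hxsv : xstar v = 0 := by
        simp only [xstar]
        exact if_pos ⟨z, hzr, hzZ⟩
      rw [hxv, hxsv]
      simp
    · have hxsv : xstar v = max ((∑ i ∈ F, β i) / (F.card : ℝ)) 0 := by
        simp only [xstar, if_neg hne, hset, Set.ncard_coe_finset, finsum_mem_coe_finset]
      have hn : (0 : ℝ) < (F.card : ℝ) := by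
        have : 0 < F.card := Finset.card_pos.mpr ⟨v, hvF⟩
        exact_mod_cast this
      rcases le_or_gt 0 (∑ i ∈ F, β i) with hS | hS
      · have : xstar v = (∑ i ∈ F, β i) / (F.card : ℝ) := by
          rw [hxsv, max_eq_left (div_nonneg hS hn.le)]
        rw [this, mul_div_cancel₀ _ hn.ne']
        simp
      · have : xstar v = 0 := by
          rw [hxsv, max_eq_right (le_of_lt (div_neg_of_neg_of_pos hS hn))]
        rw [this]
        have := hpos v
        nlinarith
  -- Pythagorean decomposition
  have hQ : ∀ x : V → ℝ, ∑ i, (x i - β i) ^ 2 =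
      ∑ i, (x i - xstar i) ^ 2 + 2 * ∑ i, (x i - xstar i) * (xstar i - β i)
        + ∑ i, (xstar i - β i) ^ 2 := by
    intro x
    rw [Finset.mul_sum, ← Finset.sum_add_distrib, ← Finset.sum_add_distrib]
    exact Finset.sum_congr rfl fun i _ => by ring
  have hle : ∀ x ∈ K, ∑ i, (xstar i - β i) ^ 2 + ∑ i, (x i - xstar i) ^ 2
      ≤ ∑ i, (x i - β i) ^ 2 := by
    intro x hx
    have ht := hT x hx
    rw [hQ x]
    linarith
  refine ⟨hxsK, ?_, ?_⟩
  · intro x hx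
    apply Real.sqrt_le_sqrt
    have hP : 0 ≤ ∑ i, (x i - xstar i) ^ 2 :=
      Finset.sum_nonneg fun i _ => sq_nonneg _
    have := hle x hx
    linarith
  · intro x hx hmin
    have h1 : d x ≤ d xstar := hmin xstar hxsK
    have h2 : ∑ i, (x i - β i) ^ 2 ≤ ∑ i, (xstar i - β i) ^ 2 := by
      have hnn1 : 0 ≤ ∑ i, (x i - β i) ^ 2 := Finset.sum_nonneg fun i _ => sq_nonneg _
      have hnn2 : 0 ≤ ∑ i, (xstar i - β i) ^ 2 := Finset.sum_nonneg fun i _ => sq_nonneg _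
      have hsq : (d x) ^ 2 ≤ (d xstar) ^ 2 :=
        pow_le_pow_left₀ (Real.sqrt_nonneg _) h1 2
      simpa only [d, Real.sq_sqrt hnn1, Real.sq_sqrt hnn2] using hsq
    have h3 := hle x hx
    have hP0 : ∑ i, (x i - xstar i) ^ 2 = 0 :=
      le_antisymm (by linarith) (Finset.sum_nonneg fun i _ => sq_nonneg _)
    funext i
    have hi := (Finset.sum_eq_zero_iff_of_nonneg
      (fun i _ => sq_nonneg (x i - xstar i))).mp hP0 i (Finset.mem_univ i)
    have := sq_eq_zero_iff.mp hi
    linarith [sub_eq_zero.mp this]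
end

section
/- Let X ∈ ℝ^{n×p} and D ∈ ℝ^{m×p} be real matrices, let S ⊆ {1,…,m} with |S| = s, and let D_{S^c} denote the submatrix of D formed by the rows indexed by the complement of S. For ν > 0 define the block matrices A₁(ν) ∈ ℝ^{(n+m)×(p+s)} with top blocks [X, 0_{n×s}] and bottom blocks [−D/√ν, E_S/√ν], and A₂(ν) ∈ ℝ^{(n+m)×(m−s)} with top block 0_{n×(m−s)} and bottom block E_{S^c}/√ν, where E_S (resp. E_{S^c}) is the m×s (resp. m×(m−s)) matrix of those columns of the m×m identity matrix indexed by S (resp. S^c). Let P(ν) denote the map applying, to each column of A₂(ν), the orthogonal projection of ℝ^{n+m} onto the column space of A₁(ν), and let r(ν) = ‖P(ν)A₂(ν)‖_F / ‖A₂(ν)‖_F. Then lim_{ν → +∞} r(ν) = 0 (equivalently, the angle θ(ν) = arccos r(ν) tends to 90°) if and only if ker(X) ⊆ ker(D_{S^c}), where ker denotes the null space {x ∈ ℝ^p : Mx = 0}. -/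
/-!
For `k ∉ S` the column `e_k/√ν` of `A₂(ν)` pairs with `A₁(ν)(β, γ) = (Xβ, (E_S γ - Dβ)/√ν)` to
`-(Dβ)_k/ν`, and `‖A₁(ν)(β, γ)‖² = ‖Xβ‖² + ‖E_S γ - Dβ‖²/ν`. Since `‖A₂(ν)‖_F² = |Sᶜ|/ν`, `r(ν) → 0`
iff `ν ‖P(e_k/√ν)‖² → 0` for every `k ∉ S`, and `‖P u‖²` is the least `c` with
`⟪u, v⟫² ≤ c ‖v‖²` on the column space. If `ker X ⊆ ker D_k`, then `(Dβ)_k² ≤ C ‖Xβ‖²`, which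
gives `ν ‖P(e_k/√ν)‖² ≤ C/ν`. If instead `x ∈ ker X` has `(Dx)_k ≠ 0`, testing against
`A₁(ν)(x, 0) = (0, -Dx/√ν)` gives `ν ‖P(e_k/√ν)‖² ≥ (Dx)_k²/‖Dx‖²` for every `ν > 0`.
-/

open Filter Topology

section Projection

variable {E : Type*} [NormedAddCommGroup E] [InnerProductSpace ℝ E]
  (K : Submodule ℝ E) [K.HasOrthogonalProjection]

theorem Submodule.inner_sq_le_sq_norm_starProjection_mul (u : E) {v : E} (hv : v ∈ K) :
    inner ℝ u v ^ 2 ≤ ‖K.starProjection u‖ ^ 2 * ‖v‖ ^ 2 := by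
  have hproj : inner ℝ (K.starProjection u) v = inner ℝ u v :=
    K.inner_orthogonalProjectionOnto_eq_of_mem_right ⟨v, hv⟩ u
  rw [← hproj, ← mul_pow, ← sq_abs]
  exact pow_le_pow_left₀ (abs_nonneg _) (abs_real_inner_le_norm _ _) 2

theorem Submodule.sq_norm_starProjection_le {u : E} {c : ℝ} (hc : 0 ≤ c)
    (h : ∀ v ∈ K, inner ℝ u v ^ 2 ≤ c * ‖v‖ ^ 2) : ‖K.starProjection u‖ ^ 2 ≤ c := by
  set P := K.starProjection u
  have hP : inner ℝ u P = ‖P‖ ^ 2 := by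
    rw [← K.inner_orthogonalProjectionOnto_eq_of_mem_right ⟨P, K.starProjection_apply_mem u⟩ u]
    exact real_inner_self_eq_norm_sq P
  have := h P (K.starProjection_apply_mem u)
  rw [hP] at this
  nlinarith [sq_nonneg ‖P‖, sq_nonneg (‖P‖ ^ 2 - c)]

end Projection

theorem Real.tendsto_sqrt_nhds_zero_iff {α : Type*} {l : Filter α} {g : α → ℝ}
    (hg : ∀ x, 0 ≤ g x) : Tendsto (fun x => √(g x)) l (𝓝 0) ↔ Tendsto g l (𝓝 0) := by
  refine ⟨fun h => ?_, fun h => by simpa using h.sqrt⟩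
  simpa [Real.sq_sqrt (hg _)] using h.pow 2

theorem tendsto_sum_nhds_zero_iff_of_nonneg {ι α : Type*} [Fintype ι] {l : Filter α}
    {f : ι → α → ℝ} (hf : ∀ i, 0 ≤ᶠ[l] f i) :
    Tendsto (fun x => ∑ i, f i x) l (𝓝 0) ↔ ∀ i, Tendsto (f i) l (𝓝 0) := by
  refine ⟨fun h i => ?_, fun h => by simpa using tendsto_finsetSum Finset.univ fun i _ => h i⟩
  refine squeeze_zero' (hf i) ?_ h
  filter_upwards [eventually_all.2 hf] with x hx
  exact Finset.single_le_sum (fun j _ => hx j) (Finset.mem_univ i)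

theorem Finset.sum_mul_ite_eq_dite {α R : Type*} [DecidableEq α] [Semiring R] {S : Finset α}
    (γ : S → R) (b : α) :
    ∑ j, γ j * (if b = j.1 then 1 else 0) = if h : b ∈ S then γ ⟨b, h⟩ else 0 := by
  split_ifs with h
  · refine (Fintype.sum_eq_single ⟨b, h⟩ fun j hj => ?_).trans (by simp)
    rw [if_neg fun e => hj (Subtype.ext e.symm), mul_zero]
  · exact Fintype.sum_eq_zero _ fun j => by rw [if_neg fun (e : b = j) => h (e ▸ j.2), mul_zero]

theorem tendsto_div_const_nhds_zero_iff {α : Type*} {l : Filter α} {f : α → ℝ} {c : ℝ}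
    (hc : c ≠ 0) : Tendsto (fun x => f x / c) l (𝓝 0) ↔ Tendsto f l (𝓝 0) :=
  ⟨fun h => by simpa [hc] using h.mul_const c, fun h => by simpa using h.div_const c⟩

theorem LinearMap.exists_sq_le_mul_sum_sq_of_ker_le {V κ : Type*} [AddCommGroup V]
    [Module ℝ V] [Fintype κ] {f : V →ₗ[ℝ] κ → ℝ} {φ : V →ₗ[ℝ] ℝ} (h : ker f ≤ ker φ) :
    ∃ C, 0 ≤ C ∧ ∀ x, φ x ^ 2 ≤ C * ∑ a, f x a ^ 2 := by
  have hker : ⨅ a, ker (proj a ∘ₗ f) ≤ ker φ := by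
    rw [← ker_pi, pi_proj_comp]
    exact h
  obtain ⟨c, hc⟩ := (Submodule.mem_span_range_iff_exists_fun ℝ).1 (mem_span_of_iInf_ker_le_ker hker)
  refine ⟨∑ a, c a ^ 2, by positivity, fun x => ?_⟩
  have hφ : φ x = ∑ a, c a * f x a := by simp [← hc]
  rw [hφ]
  exact Finset.sum_mul_sq_le_sq_mul_sq _ _ _

open Matrix

noncomputable section

namespace VariableSplit

variable {n m p : ℕ} (X : Matrix (Fin n) (Fin p) ℝ) (D : Matrix (Fin m) (Fin p) ℝ)
  (S : Finset (Fin m))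

def col₁ (ν : ℝ) : Fin p ⊕ {k : Fin m // k ∈ S} → EuclideanSpace ℝ (Fin n ⊕ Fin m) :=
  Sum.elim (fun j => WithLp.toLp 2 (Sum.elim (fun a => X a j) fun b => -D b j / √ν))
    fun j => WithLp.toLp 2 (Sum.elim (fun _ => 0) fun b => (if b = j.1 then 1 else 0) / √ν)

variable (n) in
def col₂ (ν : ℝ) (k : {k : Fin m // k ∉ S}) : EuclideanSpace ℝ (Fin n ⊕ Fin m) :=
  WithLp.toLp 2 (Sum.elim (fun _ => 0) fun b => (if b = k.1 then 1 else 0) / √ν)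

def colSpace₁ (ν : ℝ) : Submodule ℝ (EuclideanSpace ℝ (Fin n ⊕ Fin m)) :=
  Submodule.span ℝ (Set.range (col₁ X D S ν))

/-- `A₁(ν) (β, γ) = (X β, (E_S γ - D β) / √ν)`, written out coordinatewise. -/
def A₁ (ν : ℝ) (β : Fin p → ℝ) (γ : {k : Fin m // k ∈ S} → ℝ) :
    EuclideanSpace ℝ (Fin n ⊕ Fin m) :=
  WithLp.toLp 2 (Sum.elim (X *ᵥ β) fun b => ((if h : b ∈ S then γ ⟨b, h⟩ else 0) - (D *ᵥ β) b) / √ν)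

variable {X D S}

theorem sum_smul_col₁ (ν : ℝ) (c : Fin p ⊕ {k : Fin m // k ∈ S} → ℝ) :
    ∑ j, c j • col₁ X D S ν j = A₁ X D S ν (c ∘ Sum.inl) (c ∘ Sum.inr) := by
  ext (a | b)
  · simp [col₁, A₁, mulVec, dotProduct, mul_comm]
  · show _ = ((if h : b ∈ S then (c ∘ Sum.inr) ⟨b, h⟩ else 0) - (D *ᵥ (c ∘ Sum.inl)) b) / √ν
    rw [← Finset.sum_mul_ite_eq_dite (c ∘ Sum.inr)]
    simp [col₁, mulVec, dotProduct, Fintype.sum_sum_type, Finset.sum_div, sub_div, mul_div_assoc]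
    rw [sub_eq_neg_add, ← Finset.sum_neg_distrib]
    congr 1 <;> refine Finset.sum_congr rfl fun _ _ => ?_
    · ring
    · split_ifs <;> ring

theorem mem_colSpace₁_iff {ν : ℝ} {v : EuclideanSpace ℝ (Fin n ⊕ Fin m)} :
    v ∈ colSpace₁ X D S ν ↔ ∃ β γ, v = A₁ X D S ν β γ := by
  rw [colSpace₁, Submodule.mem_span_range_iff_exists_fun]
  constructor
  · rintro ⟨c, rfl⟩
    exact ⟨_, _, sum_smul_col₁ ν c⟩
  · rintro ⟨β, γ, rfl⟩
    exact ⟨Sum.elim β γ, sum_smul_col₁ ν _⟩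

theorem col₂_eq_smul_single (ν : ℝ) (k : {k : Fin m // k ∉ S}) :
    col₂ n S ν k = (√ν)⁻¹ • EuclideanSpace.single (Sum.inr k.1) 1 := by
  ext (a | b)
  · simp [col₂]
  · simp [col₂, div_eq_inv_mul]

theorem sq_norm_col₂ {ν : ℝ} (hν : 0 ≤ ν) (k : {k : Fin m // k ∉ S}) :
    ‖col₂ n S ν k‖ ^ 2 = ν⁻¹ := by
  simp [col₂_eq_smul_single, norm_smul, hν]

theorem inner_col₂_A₁ {ν : ℝ} (hν : 0 ≤ ν) (k : {k : Fin m // k ∉ S}) (β : Fin p → ℝ)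
    (γ : {k : Fin m // k ∈ S} → ℝ) :
    inner ℝ (col₂ n S ν k) (A₁ X D S ν β γ) = -(D *ᵥ β) k / ν := by
  rw [col₂_eq_smul_single, inner_smul_left, EuclideanSpace.inner_single_left]
  simp [A₁, k.2]
  rw [inv_mul_eq_div, div_div, Real.mul_self_sqrt hν, neg_div]

theorem sq_norm_A₁ {ν : ℝ} (hν : 0 < ν) (β : Fin p → ℝ) (γ : {k : Fin m // k ∈ S} → ℝ) :
    ‖A₁ X D S ν β γ‖ ^ 2 = ∑ a, (X *ᵥ β) a ^ 2 +
      (∑ b, ((if h : b ∈ S then γ ⟨b, h⟩ else 0) - (D *ᵥ β) b) ^ 2) / ν := by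
  simp [EuclideanSpace.real_norm_sq_eq, A₁, Fintype.sum_sum_type, div_pow, Finset.sum_div, hν.le]

theorem sq_norm_A₁_zero {ν : ℝ} (hν : 0 < ν) {x : Fin p → ℝ} (hx : X *ᵥ x = 0) :
    ‖A₁ X D S ν x 0‖ ^ 2 = (∑ b, (D *ᵥ x) b ^ 2) / ν := by
  simp [sq_norm_A₁ hν, hx]

theorem sq_norm_starProjection_col₂_le {ν : ℝ} (hν : 0 < ν) (k : {k : Fin m // k ∉ S}) {C : ℝ}
    (hC₀ : 0 ≤ C) (hC : ∀ β, (D *ᵥ β) k ^ 2 ≤ C * ∑ a, (X *ᵥ β) a ^ 2) :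
    ‖(colSpace₁ X D S ν).starProjection (col₂ n S ν k)‖ ^ 2 ≤ C / ν ^ 2 := by
  refine Submodule.sq_norm_starProjection_le _ (by positivity) fun v hv => ?_
  obtain ⟨β, γ, rfl⟩ := mem_colSpace₁_iff.1 hv
  rw [inner_col₂_A₁ hν.le, sq_norm_A₁ hν, div_pow, neg_sq]
  have hB : 0 ≤ (∑ b, ((if h : b ∈ S then γ ⟨b, h⟩ else 0) - (D *ᵥ β) b) ^ 2) / ν := by positivity
  calc (D *ᵥ β) k ^ 2 / ν ^ 2 ≤ C / ν ^ 2 * ∑ a, (X *ᵥ β) a ^ 2 := by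
        rw [div_mul_eq_mul_div, div_le_div_iff_of_pos_right (by positivity)]
        exact hC β
    _ ≤ _ := by gcongr; exact le_add_of_nonneg_right hB

theorem sq_div_le_mul_sq_norm_starProjection_col₂ {ν : ℝ} (hν : 0 < ν) (k : {k : Fin m // k ∉ S})
    {x : Fin p → ℝ} (hx : X *ᵥ x = 0) :
    (D *ᵥ x) k ^ 2 / ∑ b, (D *ᵥ x) b ^ 2 ≤
      ν * ‖(colSpace₁ X D S ν).starProjection (col₂ n S ν k)‖ ^ 2 := by
  have hmem : A₁ X D S ν x 0 ∈ colSpace₁ X D S ν := mem_colSpace₁_iff.2 ⟨x, 0, rfl⟩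
  have h := Submodule.inner_sq_le_sq_norm_starProjection_mul _ (col₂ n S ν k) hmem
  rw [inner_col₂_A₁ hν.le, sq_norm_A₁_zero hν hx] at h
  set P := ‖(colSpace₁ X D S ν).starProjection (col₂ n S ν k)‖ ^ 2
  set B := ∑ b, (D *ᵥ x) b ^ 2
  rcases (show 0 ≤ B by positivity).eq_or_lt with hB | hB
  · rw [← hB, div_zero]
    positivity
  rw [div_le_iff₀ hB]
  rw [neg_div, neg_sq, div_pow, div_le_iff₀ (by positivity)] at h
  calc _ ≤ P * (B / ν) * ν ^ 2 := h
    _ = _ := by field_simp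

theorem tendsto_mul_sq_norm_starProjection_col₂_iff (k : {k : Fin m // k ∉ S}) :
    Tendsto (fun ν => ν * ‖(colSpace₁ X D S ν).starProjection (col₂ n S ν k)‖ ^ 2) atTop (𝓝 0) ↔
      ∀ x, X *ᵥ x = 0 → (D *ᵥ x) k = 0 := by
  constructor
  · intro h x hx
    by_contra hk
    have hsum : (D *ᵥ x) k ^ 2 ≤ ∑ b, (D *ᵥ x) b ^ 2 :=
      Finset.single_le_sum (fun b _ => sq_nonneg ((D *ᵥ x) b)) (Finset.mem_univ k.1)
    have hpos : 0 < (D *ᵥ x) k ^ 2 / ∑ b, (D *ᵥ x) b ^ 2 :=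
      div_pos (by positivity) (hsum.trans_lt' (by positivity))
    have := ge_of_tendsto h <| (eventually_gt_atTop 0).mono fun ν hν =>
      sq_div_le_mul_sq_norm_starProjection_col₂ hν k hx
    linarith
  · intro h
    obtain ⟨C, hC₀, hC⟩ := LinearMap.exists_sq_le_mul_sum_sq_of_ker_le
      (f := X.mulVecLin) (φ := LinearMap.proj (R := ℝ) (φ := fun _ => ℝ) k.1 ∘ₗ D.mulVecLin)
      fun x hx => h x hx
    have hC' : Tendsto (fun ν => C / ν) atTop (𝓝 0) := tendsto_const_nhds.div_atTop tendsto_id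
    refine squeeze_zero' ((eventually_gt_atTop 0).mono fun ν hν => by positivity) ?_ hC'
    filter_upwards [eventually_gt_atTop 0] with ν hν
    calc _ ≤ ν * (C / ν ^ 2) := by gcongr; exact sq_norm_starProjection_col₂_le hν k hC₀ hC
      _ = C / ν := by field_simp

end VariableSplit

end

open VariableSplit

theorem stmt_11_general (n m p : ℕ) (X : Matrix (Fin n) (Fin p) ℝ)
    (D : Matrix (Fin m) (Fin p) ℝ) (S : Finset (Fin m)) :
    let E := EuclideanSpace ℝ (Fin n ⊕ Fin m)
    let toE : ((Fin n ⊕ Fin m) → ℝ) → E := (WithLp.equiv 2 ((Fin n ⊕ Fin m) → ℝ)).symm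
    -- columns of A₁(ν), indexed by the variables (β, γ_S)
    let col₁ : ℝ → (Fin p ⊕ {k : Fin m // k ∈ S}) → E := fun ν j =>
      Sum.elim
        (fun jp => toE (Sum.elim (fun a => X a jp) (fun b => -D b jp / Real.sqrt ν)))
        (fun jk => toE (Sum.elim (fun _ => 0)
          (fun b => (if b = jk.1 then 1 else 0) / Real.sqrt ν))) j
    -- columns of A₂(ν), indexed by γ_{Sᶜ}
    let col₂ : ℝ → {k : Fin m // k ∉ S} → E := fun ν k =>
      toE (Sum.elim (fun _ => 0) (fun b => (if b = k.1 then 1 else 0) / Real.sqrt ν))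
    -- column space of A₁(ν)
    let K : ℝ → Submodule ℝ E := fun ν => Submodule.span ℝ (Set.range (col₁ ν))
    -- r(ν) = ‖P_{A₁(ν)} A₂(ν)‖_F / ‖A₂(ν)‖_F
    let r : ℝ → ℝ := fun ν =>
      Real.sqrt (∑ k : {k : Fin m // k ∉ S},
          ‖((Submodule.orthogonalProjectionOnto (K ν) (col₂ ν k) : K ν) : E)‖ ^ 2) /
        Real.sqrt (∑ k : {k : Fin m // k ∉ S}, ‖col₂ ν k‖ ^ 2)
    Filter.Tendsto r Filter.atTop (nhds 0) ↔
      ∀ x : Fin p → ℝ, X.mulVec x = 0 → ∀ k : Fin m, k ∉ S → D.mulVec x k = 0 := by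
  intro _ _ _ _ _ r
  have hr : r = fun ν => √((∑ k, ‖(colSpace₁ X D S ν).starProjection (col₂ n S ν k)‖ ^ 2) /
      ∑ k, ‖col₂ n S ν k‖ ^ 2) :=
    funext fun ν => (Real.sqrt_div (by positivity) _).symm
  have hratio : ∀ᶠ ν in atTop,
      (∑ k, ‖(colSpace₁ X D S ν).starProjection (col₂ n S ν k)‖ ^ 2) /
        ∑ k, ‖col₂ n S ν k‖ ^ 2 =
      ∑ k, ν * ‖(colSpace₁ X D S ν).starProjection (col₂ n S ν k)‖ ^ 2 /
        Fintype.card {k : Fin m // k ∉ S} := by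
    filter_upwards [eventually_gt_atTop 0] with ν hν
    simp_rw [sq_norm_col₂ hν.le, Finset.sum_const, Finset.card_univ, nsmul_eq_mul,
      ← Finset.sum_div, ← Finset.mul_sum]
    field_simp
  rw [hr, Real.tendsto_sqrt_nhds_zero_iff (fun ν => by positivity), tendsto_congr' hratio,
    tendsto_sum_nhds_zero_iff_of_nonneg fun k =>
      (eventually_gt_atTop 0).mono fun ν hν => by positivity]
  have hcard (k : {k : Fin m // k ∉ S}) : (Fintype.card {k : Fin m // k ∉ S} : ℝ) ≠ 0 :=
    Nat.cast_ne_zero.2 (Fintype.card_pos_iff.2 ⟨k⟩).ne'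
  refine ⟨fun h x hx k hk => ?_, fun h k => ?_⟩
  · have hk := (tendsto_div_const_nhds_zero_iff (hcard ⟨k, hk⟩)).1 (h ⟨k, hk⟩)
    exact (tendsto_mul_sq_norm_starProjection_col₂_iff ⟨k, _⟩).1 hk x hx
  · exact (tendsto_div_const_nhds_zero_iff (hcard k)).2
      ((tendsto_mul_sq_norm_starProjection_col₂_iff k).2 fun x hx => h x hx k k.2)

/-- Theorem 1 of the paper (linear model): the normalized Frobenius norm
`r(ν) = ‖P_{A₁(ν)} A₂(ν)‖_F / ‖A₂(ν)‖_F` of the projection of the `γ_{Sᶜ}`-columns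
onto the column space of the `(β, γ_S)`-columns tends to `0` as `ν → +∞`
(equivalently, the angle `θ(ν) = arccos r(ν)` tends to `90°`)
if and only if `ker(X) ⊆ ker(D_{Sᶜ})`. -/
theorem stmt_11 (n m p s : ℕ) (X : Matrix (Fin n) (Fin p) ℝ)
    (D : Matrix (Fin m) (Fin p) ℝ) (S : Finset (Fin m)) (hs : S.card = s) :
    let E := EuclideanSpace ℝ (Fin n ⊕ Fin m)
    let toE : ((Fin n ⊕ Fin m) → ℝ) → E := (WithLp.equiv 2 ((Fin n ⊕ Fin m) → ℝ)).symm
    -- columns of A₁(ν), indexed by the variables (β, γ_S)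
    let col₁ : ℝ → (Fin p ⊕ {k : Fin m // k ∈ S}) → E := fun ν j =>
      Sum.elim
        (fun jp => toE (Sum.elim (fun a => X a jp) (fun b => -D b jp / Real.sqrt ν)))
        (fun jk => toE (Sum.elim (fun _ => 0)
          (fun b => (if b = jk.1 then 1 else 0) / Real.sqrt ν))) j
    -- columns of A₂(ν), indexed by γ_{Sᶜ}
    let col₂ : ℝ → {k : Fin m // k ∉ S} → E := fun ν k =>
      toE (Sum.elim (fun _ => 0) (fun b => (if b = k.1 then 1 else 0) / Real.sqrt ν))
    -- column space of A₁(ν)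
    let K : ℝ → Submodule ℝ E := fun ν => Submodule.span ℝ (Set.range (col₁ ν))
    -- r(ν) = ‖P_{A₁(ν)} A₂(ν)‖_F / ‖A₂(ν)‖_F
    let r : ℝ → ℝ := fun ν =>
      Real.sqrt (∑ k : {k : Fin m // k ∉ S},
          ‖((Submodule.orthogonalProjectionOnto (K ν) (col₂ ν k) : K ν) : E)‖ ^ 2) /
        Real.sqrt (∑ k : {k : Fin m // k ∉ S}, ‖col₂ ν k‖ ^ 2)
    Filter.Tendsto r Filter.atTop (nhds 0) ↔
      ∀ x : Fin p → ℝ, X.mulVec x = 0 → ∀ k : Fin m, k ∉ S → D.mulVec x k = 0 :=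
  stmt_11_general n m p X D S
end
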